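/- arXiv:2207.00914 — 3 statements merged into one kernel-verified Lean document; each statement's English description precedes it below -/
import Mathlib

section
/- Let τ > 0 and define ρ_τ : ℝ → ℝ by ρ_τ(s) = |s| if |s| ≥ τ and ρ_τ(s) = -s⁴/(8τ³) + 3s²/(4τ) + 3τ/8 if |s| < τ. Then ρ_τ is twice continuously differentiable on ℝ, ρ_τ'(0) = 0, |s| ≤ ρ_τ(s) for all s ∈ ℝ, and |ρ_τ'(s)| ≤ 1 for all s ∈ ℝ. -/
/-- The approximation function `ρ_τ`. -/
noncomputable def rho (τ s : ℝ) : ℝ :=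
  if τ ≤ |s| then |s| else -s ^ 4 / (8 * τ ^ 3) + 3 * s ^ 2 / (4 * τ) + 3 * τ / 8

/-! On `|s| < τ`, `ρ_τ` is a quartic `P` whose derivative, the odd cubic `q`, equals `±1` at
`s = ±τ`, and whose second derivative `3 (τ² - s²) / (2 τ³)` vanishes there; so `ρ_τ` meets `|s|`
to second order at `±τ`. Writing `c(s) = max (-τ) (min τ s)`, this gives `ρ_τ' = q ∘ c` and
`ρ_τ'' = q' ∘ c`, both continuous; the kinks at `±τ` are removable because a continuous function
that is differentiable off finitely many points, with a derivative there that extends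
continuously, is differentiable everywhere. The two bounds are the factorizations
`P(s) - |s| = (τ - |s|)³ (|s| + 3τ) / (8τ³)` and `1 ∓ q(x) = (τ ∓ x)² (2τ ± x) / (2τ³)`. -/

open Set Filter Topology

section RemovableSingularities

variable {E : Type*} [NormedAddCommGroup E] [NormedSpace ℝ E] {f g : ℝ → E}

theorem hasDerivAt_of_eventually_hasDerivAt_of_ne {x : ℝ}
    (f_diff : ∀ᶠ y in 𝓝[≠] x, HasDerivAt f (g y) y) (hf : ContinuousAt f x)
    (hg : ContinuousAt g x) : HasDerivAt f (g x) x := by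
  have right : ∀ᶠ y in 𝓝[>] x, HasDerivAt f (g y) y := nhdsGT_le_nhdsNE x f_diff
  have left : ∀ᶠ y in 𝓝[<] x, HasDerivAt f (g y) y := nhdsLT_le_nhdsNE x f_diff
  have hIci : HasDerivWithinAt f (g x) (Ici x) x :=
    hasDerivWithinAt_Ici_of_tendsto_deriv (fun y hy => hy.differentiableAt.differentiableWithinAt)
      hf.continuousWithinAt right
      ((tendsto_inf_left hg).congr' (right.mono fun y hy => hy.deriv.symm))
  have hIic : HasDerivWithinAt f (g x) (Iic x) x :=
    hasDerivWithinAt_Iic_of_tendsto_deriv (fun y hy => hy.differentiableAt.differentiableWithinAt)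
      hf.continuousWithinAt left
      ((tendsto_inf_left hg).congr' (left.mono fun y hy => hy.deriv.symm))
  simpa using hIic.union hIci

theorem hasDerivAt_of_hasDerivAt_of_notMem_finite {S : Set ℝ} (hS : S.Finite)
    (f_diff : ∀ y ∉ S, HasDerivAt f (g y) y) (hf : Continuous f) (hg : Continuous g) (x : ℝ) :
    HasDerivAt f (g x) x := by
  refine hasDerivAt_of_eventually_hasDerivAt_of_ne ?_ hf.continuousAt hg.continuousAt
  have hS' : ∀ᶠ y in 𝓝 x, y ∉ S \ {x} :=
    hS.sdiff.isClosed.compl_mem_nhds fun h => h.2 rfl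
  filter_upwards [nhdsWithin_le_nhds hS', self_mem_nhdsWithin] with y hy hne
  exact f_diff y fun h => hy ⟨h, hne⟩

end RemovableSingularities

theorem contDiff_two_of_hasDerivAt {𝕜 F : Type*} [NontriviallyNormedField 𝕜]
    [NormedAddCommGroup F] [NormedSpace 𝕜 F] {f f' f'' : 𝕜 → F} (hf : ∀ x, HasDerivAt f (f' x) x)
    (hf' : ∀ x, HasDerivAt f' (f'' x) x) (hf'' : Continuous f'') : ContDiff 𝕜 2 f := by
  have hderiv : deriv f = f' := funext fun x => (hf x).deriv
  have hderiv' : deriv f' = f'' := funext fun x => (hf' x).deriv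
  rw [show (2 : WithTop ℕ∞) = 1 + 1 from rfl, contDiff_succ_iff_deriv, hderiv,
    contDiff_one_iff_deriv, hderiv']
  exact ⟨fun x => (hf x).differentiableAt, by simp, fun x => (hf' x).differentiableAt, hf''⟩

section MaxMin

variable {E : Type*} [NormedAddCommGroup E] [NormedSpace ℝ E] {a b : ℝ}

theorem max_min_eq_left_of_le (hab : a ≤ b) {s : ℝ} (hs : s ≤ a) : max a (min b s) = a := by
  rw [min_eq_right (hs.trans hab), max_eq_left hs]

theorem max_min_eq_right_of_le (hab : a ≤ b) {s : ℝ} (hs : b ≤ s) : max a (min b s) = b := by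
  rw [min_eq_left hs, max_eq_right hab]

theorem max_min_mem_Icc (hab : a ≤ b) (s : ℝ) : max a (min b s) ∈ Icc a b :=
  ⟨le_max_left _ _, max_le hab (min_le_left _ _)⟩

theorem max_min_eq_self_of_mem_Icc {s : ℝ} (hs : s ∈ Icc a b) : max a (min b s) = s := by
  rw [min_eq_right hs.2, max_eq_right hs.1]

theorem hasDerivAt_comp_max_min {g g' : ℝ → E} (hab : a ≤ b) (hg : ∀ x, HasDerivAt g (g' x) x)
    (hg' : Continuous g') (ha : g' a = 0) (hb : g' b = 0) (x : ℝ) :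
    HasDerivAt (fun s => g (max a (min b s))) (g' (max a (min b x))) x := by
  have hg_cont : Continuous g := continuous_iff_continuousAt.2 fun x => (hg x).continuousAt
  have hcont : Continuous fun s => g (max a (min b s)) := by fun_prop
  have hcont' : Continuous fun s => g' (max a (min b s)) := by fun_prop
  refine hasDerivAt_of_hasDerivAt_of_notMem_finite (S := {a, b}) (by simp) (fun y hy => ?_)
    hcont hcont' x
  simp only [mem_insert_iff, mem_singleton_iff, not_or] at hy
  rcases lt_or_gt_of_ne hy.1 with hya | hay
  · rw [max_min_eq_left_of_le hab hya.le, ha]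
    refine (hasDerivAt_const y (g a)).congr_of_eventuallyEq ?_
    filter_upwards [Iio_mem_nhds hya] with s hs
    rw [max_min_eq_left_of_le hab (le_of_lt hs)]
  rcases lt_or_gt_of_ne hy.2 with hyb | hby
  · rw [max_min_eq_self_of_mem_Icc ⟨hay.le, hyb.le⟩]
    refine (hg y).congr_of_eventuallyEq ?_
    filter_upwards [Ioo_mem_nhds hay hyb] with s hs
    rw [max_min_eq_self_of_mem_Icc ⟨hs.1.le, hs.2.le⟩]
  · rw [max_min_eq_right_of_le hab hby.le, hb]
    refine (hasDerivAt_const y (g b)).congr_of_eventuallyEq ?_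
    filter_upwards [Ioi_mem_nhds hby] with s hs
    rw [max_min_eq_right_of_le hab (le_of_lt hs)]

end MaxMin

section Rho

variable {τ : ℝ}

noncomputable def rhoQuartic (τ s : ℝ) : ℝ :=
  -s ^ 4 / (8 * τ ^ 3) + 3 * s ^ 2 / (4 * τ) + 3 * τ / 8

noncomputable def rhoCubic (τ x : ℝ) : ℝ := 3 * x / (2 * τ) - x ^ 3 / (2 * τ ^ 3)

theorem hasDerivAt_rhoQuartic (hτ : τ ≠ 0) (s : ℝ) :
    HasDerivAt (rhoQuartic τ) (rhoCubic τ s) s := by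
  refine ((((hasDerivAt_pow 4 s).neg.div_const _).add
    (((hasDerivAt_pow 2 s).const_mul 3).div_const _)).add_const _).congr_deriv ?_
  simp only [rhoCubic]
  field_simp
  ring

theorem hasDerivAt_rhoCubic (hτ : τ ≠ 0) (x : ℝ) :
    HasDerivAt (rhoCubic τ) (3 / (2 * τ ^ 3) * (τ ^ 2 - x ^ 2)) x := by
  refine ((((hasDerivAt_id x).const_mul 3).div_const _).sub
    ((hasDerivAt_pow 3 x).div_const _)).congr_deriv ?_
  field_simp
  ring

theorem rhoCubic_self (hτ : τ ≠ 0) : rhoCubic τ τ = 1 := by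
  simp only [rhoCubic]
  field_simp
  ring

theorem rhoCubic_neg_self (hτ : τ ≠ 0) : rhoCubic τ (-τ) = -1 := by
  simp only [rhoCubic]
  field_simp
  ring

theorem rhoQuartic_of_abs_eq (hτ : τ ≠ 0) {s : ℝ} (hs : |s| = τ) : rhoQuartic τ s = τ := by
  have hs2 : s ^ 2 = τ ^ 2 := by rw [← sq_abs, hs]
  rw [rhoQuartic, show s ^ 4 = (s ^ 2) ^ 2 by ring, hs2]
  field_simp
  ring

theorem rho_of_abs_lt {s : ℝ} (hs : |s| < τ) : rho τ s = rhoQuartic τ s :=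
  if_neg hs.not_ge

theorem rho_of_le_abs {s : ℝ} (hs : τ ≤ |s|) : rho τ s = |s| :=
  if_pos hs

theorem continuous_rho (hτ : τ ≠ 0) : Continuous (rho τ) :=
  Continuous.if_le continuous_abs (by fun_prop) continuous_const continuous_abs
    fun _ hs => hs.symm.trans (rhoQuartic_of_abs_eq hτ hs.symm).symm

theorem hasDerivAt_rho (hτ : 0 < τ) (s : ℝ) :
    HasDerivAt (rho τ) (rhoCubic τ (max (-τ) (min τ s))) s := by
  have hcont : Continuous fun s => rhoCubic τ (max (-τ) (min τ s)) := by
    unfold rhoCubic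
    fun_prop
  refine hasDerivAt_of_hasDerivAt_of_notMem_finite (S := {-τ, τ}) (by simp) (fun y hy => ?_)
    (continuous_rho hτ.ne') hcont s
  simp only [mem_insert_iff, mem_singleton_iff, not_or] at hy
  rcases lt_or_gt_of_ne hy.1 with hyl | hyl
  · rw [max_min_eq_left_of_le (by linarith) hyl.le, rhoCubic_neg_self hτ.ne']
    refine (hasDerivAt_neg y).congr_of_eventuallyEq ?_
    filter_upwards [Iio_mem_nhds hyl] with t (ht : t < -τ)
    rw [rho_of_le_abs (by rw [abs_of_neg (by linarith)]; linarith), abs_of_neg (by linarith)]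
  rcases lt_or_gt_of_ne hy.2 with hyr | hyr
  · rw [max_min_eq_self_of_mem_Icc ⟨hyl.le, hyr.le⟩]
    refine (hasDerivAt_rhoQuartic hτ.ne' y).congr_of_eventuallyEq ?_
    filter_upwards [Ioo_mem_nhds hyl hyr] with t ht
    exact rho_of_abs_lt (abs_lt.2 ht)
  · rw [max_min_eq_right_of_le (by linarith) hyr.le, rhoCubic_self hτ.ne']
    refine (hasDerivAt_id y).congr_of_eventuallyEq ?_
    filter_upwards [Ioi_mem_nhds hyr] with t (ht : τ < t)
    rw [rho_of_le_abs (by rw [abs_of_pos (by linarith)]; linarith), abs_of_pos (by linarith), id]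

theorem abs_le_rhoQuartic (hτ : 0 < τ) {s : ℝ} (hs : |s| ≤ τ) : |s| ≤ rhoQuartic τ s := by
  have hgap : rhoQuartic τ s - |s| = (τ - |s|) ^ 3 * (|s| + 3 * τ) / (8 * τ ^ 3) := by
    rw [rhoQuartic, ← sq_abs s, ← (show Even 4 by decide).pow_abs s]
    field_simp
    ring
  have : 0 ≤ (τ - |s|) ^ 3 * (|s| + 3 * τ) / (8 * τ ^ 3) := by
    have := abs_nonneg s
    have : 0 ≤ τ - |s| := by linarith
    positivity
  linarith

theorem abs_le_rho (hτ : 0 < τ) (s : ℝ) : |s| ≤ rho τ s := by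
  rcases le_or_gt τ |s| with hs | hs
  · rw [rho_of_le_abs hs]
  · rw [rho_of_abs_lt hs]
    exact abs_le_rhoQuartic hτ hs.le

theorem abs_rhoCubic_le_one (hτ : 0 < τ) {x : ℝ} (hx : x ∈ Icc (-τ) τ) : |rhoCubic τ x| ≤ 1 := by
  have hlow : rhoCubic τ x + 1 = (x + τ) ^ 2 * (2 * τ - x) / (2 * τ ^ 3) := by
    simp only [rhoCubic]
    field_simp
    ring
  have hupp : 1 - rhoCubic τ x = (τ - x) ^ 2 * (x + 2 * τ) / (2 * τ ^ 3) := by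
    simp only [rhoCubic]
    field_simp
    ring
  have h1 : 0 ≤ 2 * τ - x := by linarith [hx.2]
  have h2 : 0 ≤ x + 2 * τ := by linarith [hx.1]
  rw [abs_le]
  constructor
  · have : 0 ≤ (x + τ) ^ 2 * (2 * τ - x) / (2 * τ ^ 3) := by positivity
    linarith
  · have : 0 ≤ (τ - x) ^ 2 * (x + 2 * τ) / (2 * τ ^ 3) := by positivity
    linarith

end Rho

theorem stmt0 (τ : ℝ) (hτ : 0 < τ) :
    ContDiff ℝ 2 (rho τ) ∧
    deriv (rho τ) 0 = 0 ∧
    (∀ s : ℝ, |s| ≤ rho τ s) ∧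
    (∀ s : ℝ, |deriv (rho τ) s| ≤ 1) := by
  have hderiv : deriv (rho τ) = fun s => rhoCubic τ (max (-τ) (min τ s)) :=
    funext fun s => (hasDerivAt_rho hτ s).deriv
  have hderiv2 := hasDerivAt_comp_max_min (a := -τ) (b := τ) (by linarith)
    (hasDerivAt_rhoCubic hτ.ne') (by fun_prop) (by ring) (by ring)
  refine ⟨contDiff_two_of_hasDerivAt (hasDerivAt_rho hτ) hderiv2 (by fun_prop), ?_,
    abs_le_rho hτ, fun s => ?_⟩
  · simp [hderiv, rhoCubic, hτ.le]
  · rw [hderiv]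
    exact abs_rhoCubic_le_one hτ (max_min_mem_Icc (by linarith) s)
end

section
/- Let p ∈ [1, ∞) and let u be a classical solution of the target system with continuous coefficient λ satisfying λ(x,t) ≥ λ̲ > 0 and with initial data u₀ = u(·,0). Then the L^p stability estimate (∫₀¹ |u(x,t)|^p dx)^{1/p} ≤ e^{-λ̲ t} · (∫₀¹ |u₀(x)|^p dx)^{1/p} holds for all t > 0. -/
/-!
`|s|^p` is not `C²` at `0` when `p < 2`, so work with the convex regularisation
`Φ_ε(s) = (s² + ε²)^(p/2)` and `F(t) = ∫₀¹ Φ_ε(u(x,t)) dx`. Integrating by parts with the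
Neumann conditions, `F' = -∫ Φ_ε''(u) u_x² - ∫ λ u Φ_ε'(u) ≤ -λ̲ ∫ u Φ_ε'(u)`, and
`s Φ_ε'(s) = p Φ_ε(s) - p ε² (s² + ε²)^(p/2 - 1)` where the last term is `O(ε)` uniformly on
bounded sets. Hence `F' ≤ -λ̲ p (F - O(ε))`, Grönwall gives
`F(t) ≤ e^{-λ̲ p t} F(0) + O(ε)`, and `ε → 0` followed by a `p`-th root yields the estimate.
-/

open MeasureTheory Set

namespace RegPow

noncomputable def regPow (p ε s : ℝ) : ℝ := (s ^ 2 + ε ^ 2) ^ (p / 2)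

noncomputable def regPowDeriv (p ε s : ℝ) : ℝ := p * s * (s ^ 2 + ε ^ 2) ^ (p / 2 - 1)

noncomputable def regPowDeriv2 (p ε s : ℝ) : ℝ :=
  p * ((p - 1) * s ^ 2 + ε ^ 2) * (s ^ 2 + ε ^ 2) ^ (p / 2 - 2)

variable {p ε : ℝ}

lemma regPow_zero (p s : ℝ) : regPow p 0 s = |s| ^ p := by
  rw [regPow, zero_pow two_ne_zero, add_zero, ← sq_abs, ← Real.rpow_natCast,
    ← Real.rpow_mul (abs_nonneg s)]
  congr 1; ring

lemma continuous_regPow_uncurry (hp : 0 ≤ p) :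
    Continuous fun q : ℝ × ℝ => regPow p q.1 q.2 :=
  by unfold regPow; fun_prop (disch := positivity)

lemma hasDerivAt_regPow (hε : ε ≠ 0) (s : ℝ) :
    HasDerivAt (regPow p ε) (regPowDeriv p ε s) s := by
  have h := ((hasDerivAt_pow 2 s).add_const (ε ^ 2)).rpow_const (p := p / 2)
    (Or.inl (by positivity))
  refine h.congr_deriv ?_
  unfold regPowDeriv; push_cast; ring

lemma hasDerivAt_regPowDeriv (hε : ε ≠ 0) (s : ℝ) :
    HasDerivAt (regPowDeriv p ε) (regPowDeriv2 p ε s) s := by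
  have hpos : 0 < s ^ 2 + ε ^ 2 := by positivity
  have h := ((hasDerivAt_id s).const_mul p).mul
    (((hasDerivAt_pow 2 s).add_const (ε ^ 2)).rpow_const (p := p / 2 - 1) (Or.inl hpos.ne'))
  refine h.congr_deriv ?_
  have hsplit :
      (s ^ 2 + ε ^ 2) ^ (p / 2 - 1) = (s ^ 2 + ε ^ 2) ^ (p / 2 - 2) * (s ^ 2 + ε ^ 2) := by
    rw [← Real.rpow_add_one hpos.ne']; ring_nf
  unfold regPowDeriv2; rw [hsplit, id]; push_cast; ring_nf

lemma continuous_regPow (hε : ε ≠ 0) : Continuous (regPow p ε) :=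
  continuous_iff_continuousAt.2 fun s => (hasDerivAt_regPow hε s).continuousAt

lemma continuous_regPowDeriv (hε : ε ≠ 0) : Continuous (regPowDeriv p ε) :=
  continuous_iff_continuousAt.2 fun s => (hasDerivAt_regPowDeriv hε s).continuousAt

lemma continuous_regPowDeriv2 (hε : ε ≠ 0) : Continuous (regPowDeriv2 p ε) := by
  unfold regPowDeriv2
  exact (by fun_prop : Continuous fun s : ℝ => p * ((p - 1) * s ^ 2 + ε ^ 2)).mul
    ((by fun_prop : Continuous fun s : ℝ => s ^ 2 + ε ^ 2).rpow_const
      fun s => Or.inl (by positivity))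

lemma regPowDeriv2_nonneg (hp : 1 ≤ p) (s : ℝ) : 0 ≤ regPowDeriv2 p ε s := by
  have : 0 ≤ (p - 1) * s ^ 2 := mul_nonneg (by linarith) (sq_nonneg s)
  unfold regPowDeriv2; positivity

lemma mul_regPowDeriv_nonneg (hp : 0 ≤ p) (s : ℝ) : 0 ≤ s * regPowDeriv p ε s := by
  have : s * regPowDeriv p ε s = p * s ^ 2 * (s ^ 2 + ε ^ 2) ^ (p / 2 - 1) := by
    rw [regPowDeriv]; ring
  rw [this]; positivity

lemma abs_rpow_le_regPow (hp : 0 ≤ p) (s : ℝ) : |s| ^ p ≤ regPow p ε s := by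
  rw [← regPow_zero]
  exact Real.rpow_le_rpow (by positivity) (by simp [sq_nonneg]) (by positivity)

lemma sq_mul_rpow_le (hp : 1 ≤ p) (hε₀ : 0 < ε) (hε₁ : ε ≤ 1) (s : ℝ) :
    ε ^ 2 * (s ^ 2 + ε ^ 2) ^ (p / 2 - 1) ≤ ε * (s ^ 2 + 1) ^ (p / 2) := by
  have hε2 : ε ^ 2 ≤ ε := by nlinarith
  have hone : 1 ≤ (s ^ 2 + 1) ^ (p / 2) := Real.one_le_rpow (by nlinarith) (by positivity)
  rcases le_or_gt 2 p with h2p | h2p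
  · have : (s ^ 2 + ε ^ 2) ^ (p / 2 - 1) ≤ (s ^ 2 + 1) ^ (p / 2) :=
      calc (s ^ 2 + ε ^ 2) ^ (p / 2 - 1) ≤ (s ^ 2 + 1) ^ (p / 2 - 1) :=
            Real.rpow_le_rpow (by positivity) (by nlinarith) (by linarith)
        _ ≤ (s ^ 2 + 1) ^ (p / 2) :=
            Real.rpow_le_rpow_of_exponent_le (by nlinarith) (by linarith)
    exact mul_le_mul hε2 this (by positivity) hε₀.le
  · calc ε ^ 2 * (s ^ 2 + ε ^ 2) ^ (p / 2 - 1) ≤ ε ^ 2 * (ε ^ 2) ^ (p / 2 - 1) :=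
          mul_le_mul_of_nonneg_left
            (Real.rpow_le_rpow_of_nonpos (by positivity) (by nlinarith) (by linarith))
            (by positivity)
      _ = ε ^ p := by
          rw [← Real.rpow_natCast ε 2, ← Real.rpow_mul hε₀.le, ← Real.rpow_add hε₀]
          push_cast; ring_nf
      _ ≤ ε ^ (1 : ℝ) := Real.rpow_le_rpow_of_exponent_ge hε₀ hε₁ hp
      _ ≤ ε * (s ^ 2 + 1) ^ (p / 2) := by
          rw [Real.rpow_one]; exact le_mul_of_one_le_right hε₀.le hone

lemma mul_regPow_le (hp : 1 ≤ p) (hε₀ : 0 < ε) (hε₁ : ε ≤ 1) (s : ℝ) :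
    p * regPow p ε s ≤ s * regPowDeriv p ε s + p * (ε * (s ^ 2 + 1) ^ (p / 2)) := by
  have hpos : 0 < s ^ 2 + ε ^ 2 := by positivity
  have hsplit : regPow p ε s = (s ^ 2 + ε ^ 2) ^ (p / 2 - 1) * (s ^ 2 + ε ^ 2) := by
    rw [regPow, ← Real.rpow_add_one hpos.ne']; ring_nf
  have := mul_le_mul_of_nonneg_left (sq_mul_rpow_le hp hε₀ hε₁ s) (by linarith : 0 ≤ p)
  rw [hsplit, regPowDeriv]; nlinarith

end RegPow

section ParametricIntegral

variable {f f' : ℝ → ℝ → ℝ} {a b : ℝ}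

lemma continuousOn_intervalIntegral_of_continuousOn_prod {c d : ℝ} (hab : a ≤ b) (hcd : c ≤ d)
    (hf : ContinuousOn (Function.uncurry f) (Icc a b ×ˢ Icc c d)) :
    ContinuousOn (fun t => ∫ x in a..b, f x t) (Icc c d) := by
  -- extend `f` continuously off the rectangle, so the global parametric lemma applies
  set g : ℝ → ℝ → ℝ := fun t x => f (projIcc a b hab x) (projIcc c d hcd t)
  have hg : Continuous (Function.uncurry g) :=
    hf.comp_continuous
      (((continuous_subtype_val.comp (continuous_projIcc (h := hab))).comp continuous_snd).prodMk
        ((continuous_subtype_val.comp (continuous_projIcc (h := hcd))).comp continuous_fst))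
      fun q => ⟨Subtype.prop _, Subtype.prop _⟩
  refine (intervalIntegral.continuous_parametric_intervalIntegral_of_continuous' hg a b
    ).continuousOn.congr fun t ht => intervalIntegral.integral_congr fun x hx => ?_
  rw [uIcc_of_le hab] at hx
  simp [g, projIcc_of_mem _ hx, projIcc_of_mem _ ht]

lemma hasDerivAt_intervalIntegral_of_continuousOn {t₀ r : ℝ} (hab : a ≤ b) (hr : 0 < r)
    (hf : ContinuousOn (Function.uncurry f) (Icc a b ×ˢ Icc (t₀ - r) (t₀ + r)))
    (hf' : ContinuousOn (Function.uncurry f') (Icc a b ×ˢ Icc (t₀ - r) (t₀ + r)))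
    (hderiv : ∀ x ∈ Icc a b, ∀ t ∈ Ioo (t₀ - r) (t₀ + r), HasDerivAt (f x) (f' x t) t) :
    HasDerivAt (fun t => ∫ x in a..b, f x t) (∫ x in a..b, f' x t₀) t₀ := by
  obtain ⟨C, hC⟩ := (isCompact_Icc.prod isCompact_Icc).exists_bound_of_continuousOn hf'
  have hIoc : uIoc a b ⊆ Icc a b := by rw [uIoc_of_le hab]; exact Ioc_subset_Icc_self
  have hmem : t₀ ∈ Icc (t₀ - r) (t₀ + r) := ⟨by linarith, by linarith⟩
  refine (intervalIntegral.hasDerivAt_integral_of_dominated_loc_of_deriv_le (bound := fun _ => C)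
    (F := fun t x => f x t) (F' := fun t x => f' x t)
    (Ioo_mem_nhds (by linarith : t₀ - r < t₀) (by linarith : t₀ < t₀ + r))
    ?_ ?_ ?_ ?_ intervalIntegrable_const ?_).2
  · filter_upwards [Ioo_mem_nhds (by linarith : t₀ - r < t₀) (by linarith : t₀ < t₀ + r)] with t ht
    exact ((hf.uncurry_right t (Ioo_subset_Icc_self ht)).mono hIoc).aestronglyMeasurable
      measurableSet_uIoc
  · exact (hf.uncurry_right t₀ hmem).intervalIntegrable_of_Icc hab
  · exact ((hf'.uncurry_right t₀ hmem).mono hIoc).aestronglyMeasurable measurableSet_uIoc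
  · exact Filter.Eventually.of_forall fun x hx t ht => hC (x, t) ⟨hIoc hx, Ioo_subset_Icc_self ht⟩
  · exact Filter.Eventually.of_forall fun x hx t ht => hderiv x (hIoc hx) t ht

end ParametricIntegral

lemma integral_comp_mul_deriv2_nonpos {ψ ψ' v v' v'' : ℝ → ℝ} {a b : ℝ} (hab : a ≤ b)
    (hψ : ∀ y, HasDerivAt ψ (ψ' y) y) (hψ'_cont : Continuous ψ') (hψ'_nonneg : ∀ y, 0 ≤ ψ' y)
    (hv : ∀ x ∈ Icc a b, HasDerivAt v (v' x) x) (hv' : ∀ x ∈ Icc a b, HasDerivAt v' (v'' x) x)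
    (hv'_cont : ContinuousOn v' (Icc a b)) (hv''_cont : ContinuousOn v'' (Icc a b))
    (ha : v' a = 0) (hb : v' b = 0) :
    ∫ x in a..b, ψ (v x) * v'' x ≤ 0 := by
  rw [← uIcc_of_le hab] at hv hv' hv'_cont hv''_cont
  have hv_cont : ContinuousOn v (uIcc a b) := fun x hx => (hv x hx).continuousAt.continuousWithinAt
  have hψv : ∀ x ∈ uIcc a b, HasDerivAt (fun x => ψ (v x)) (ψ' (v x) * v' x) x :=
    fun x hx => (hψ (v x)).comp x (hv x hx)
  rw [intervalIntegral.integral_mul_deriv_eq_deriv_mul hψv hv'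
    (((hψ'_cont.comp_continuousOn hv_cont).mul hv'_cont).intervalIntegrable)
    hv''_cont.intervalIntegrable, ha, hb]
  have : 0 ≤ ∫ x in a..b, ψ' (v x) * v' x * v' x :=
    intervalIntegral.integral_nonneg hab fun x _ => by
      rw [mul_assoc]; exact mul_nonneg (hψ'_nonneg _) (mul_self_nonneg _)
  linarith

lemma sub_le_exp_mul_sub_of_hasDerivAt_le {F F' : ℝ → ℝ} {K d a b : ℝ} (hab : a ≤ b)
    (hF_cont : ContinuousOn F (Icc a b)) (hF : ∀ t ∈ Ioo a b, HasDerivAt F (F' t) t)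
    (hF' : ∀ t ∈ Ioo a b, F' t ≤ -K * (F t - d)) :
    F b - d ≤ Real.exp (-K * (b - a)) * (F a - d) := by
  set G : ℝ → ℝ := fun t => Real.exp (K * t) * (F t - d)
  have hG : ∀ t ∈ Ioo a b,
      HasDerivAt G (K * Real.exp (K * t) * (F t - d) + Real.exp (K * t) * F' t) t :=
    fun t ht => (((hasDerivAt_id t).const_mul K).exp.mul ((hF t ht).sub_const d)).congr_deriv
      (by simp only [id, mul_one]; ring)
  have hG_anti : AntitoneOn G (Icc a b) := by
    refine antitoneOn_of_deriv_nonpos (convex_Icc a b)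
      ((by fun_prop : Continuous fun t => Real.exp (K * t)).continuousOn.mul
        (hF_cont.sub continuousOn_const)) ?_ ?_ <;> rw [interior_Icc]
    · exact fun t ht => (hG t ht).differentiableAt.differentiableWithinAt
    · intro t ht
      rw [(hG t ht).deriv]
      have := mul_le_mul_of_nonneg_left (hF' t ht) (Real.exp_pos (K * t)).le
      linarith
  have h := hG_anti (left_mem_Icc.2 hab) (right_mem_Icc.2 hab) hab
  calc F b - d = Real.exp (-K * b) * G b := by
        simp only [G, ← mul_assoc, ← Real.exp_add]; ring_nf; simp
    _ ≤ Real.exp (-K * b) * G a := mul_le_mul_of_nonneg_left h (Real.exp_pos _).le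
    _ = Real.exp (-K * (b - a)) * (F a - d) := by
        simp only [G, ← mul_assoc, ← Real.exp_add]; ring_nf

open RegPow

/-- A classical solution of the target system
`u_t = u_xx - lam·u` on `(0,1)×(0,∞)` with Neumann boundary conditions. -/
structure TargetSol (lam u ut ux uxx : ℝ → ℝ → ℝ) : Prop where
  cont : ContinuousOn (fun q : ℝ × ℝ => u q.1 q.2) (Set.Icc 0 1 ×ˢ Set.Ici 0)
  deriv_t : ∀ x ∈ Set.Icc (0:ℝ) 1, ∀ t ∈ Set.Ioi (0:ℝ), HasDerivAt (fun s => u x s) (ut x t) t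
  deriv_x : ∀ x ∈ Set.Icc (0:ℝ) 1, ∀ t ∈ Set.Ioi (0:ℝ), HasDerivAt (fun y => u y t) (ux x t) x
  deriv_xx : ∀ x ∈ Set.Icc (0:ℝ) 1, ∀ t ∈ Set.Ioi (0:ℝ), HasDerivAt (fun y => ux y t) (uxx x t) x
  cont_ut : ContinuousOn (fun q : ℝ × ℝ => ut q.1 q.2) (Set.Icc 0 1 ×ˢ Set.Ioi 0)
  cont_ux : ContinuousOn (fun q : ℝ × ℝ => ux q.1 q.2) (Set.Icc 0 1 ×ˢ Set.Ioi 0)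
  cont_uxx : ContinuousOn (fun q : ℝ × ℝ => uxx q.1 q.2) (Set.Icc 0 1 ×ˢ Set.Ioi 0)
  pde : ∀ x ∈ Set.Ioo (0:ℝ) 1, ∀ t ∈ Set.Ioi (0:ℝ), ut x t = uxx x t - lam x t * u x t
  bc0 : ∀ t ∈ Set.Ioi (0:ℝ), ux 0 t = 0
  bc1 : ∀ t ∈ Set.Ioi (0:ℝ), ux 1 t = 0

namespace TargetSol

variable {lam u ut ux uxx : ℝ → ℝ → ℝ}

lemma hasDerivAt_integral_comp (hu : TargetSol lam u ut ux uxx) {ψ ψ' : ℝ → ℝ}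
    (hψ : ∀ y, HasDerivAt ψ (ψ' y) y) (hψ' : Continuous ψ') {t : ℝ} (ht : 0 < t) :
    HasDerivAt (fun t => ∫ x in (0:ℝ)..1, ψ (u x t)) (∫ x in (0:ℝ)..1, ψ' (u x t) * ut x t) t := by
  have hpos : Icc (t - t / 2) (t + t / 2) ⊆ Ioi 0 := fun τ hτ => by
    simp only [mem_Ioi]; linarith [hτ.1]
  have hψ_cont : Continuous ψ := continuous_iff_continuousAt.2 fun y => (hψ y).continuousAt
  refine hasDerivAt_intervalIntegral_of_continuousOn (f := fun x t => ψ (u x t)) zero_le_one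
    (half_pos ht) ?_ ?_ fun x hx τ hτ => (hψ (u x τ)).comp τ (hu.deriv_t x hx τ ?_)
  · exact hψ_cont.comp_continuousOn
      (hu.cont.mono (prod_mono_right (hpos.trans Ioi_subset_Ici_self)))
  · exact (hψ'.comp_continuousOn
      (hu.cont.mono (prod_mono_right (hpos.trans Ioi_subset_Ici_self)))).mul
      (hu.cont_ut.mono (prod_mono_right hpos))
  · exact hpos (Ioo_subset_Icc_self hτ)

lemma integral_mul_ut_le (hu : TargetSol lam u ut ux uxx)
    (hlam_cont : ContinuousOn (fun q : ℝ × ℝ => lam q.1 q.2) (Icc 0 1 ×ˢ Ici 0))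
    {ψ ψ' : ℝ → ℝ} (hψ : ∀ y, HasDerivAt ψ (ψ' y) y) (hψ'_cont : Continuous ψ')
    (hψ'_nonneg : ∀ y, 0 ≤ ψ' y) {t : ℝ} (ht : 0 < t) :
    ∫ x in (0:ℝ)..1, ψ (u x t) * ut x t ≤ -∫ x in (0:ℝ)..1, lam x t * (u x t * ψ (u x t)) := by
  have hψ_cont : Continuous ψ := continuous_iff_continuousAt.2 fun y => (hψ y).continuousAt
  have hu_cont : ContinuousOn (fun x => u x t) (Icc 0 1) := hu.cont.uncurry_right t ht.le
  have hpde : ∫ x in (0:ℝ)..1, ψ (u x t) * ut x t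
      = ∫ x in (0:ℝ)..1, ψ (u x t) * (uxx x t - lam x t * u x t) := by
    simp only [intervalIntegral.integral_of_le zero_le_one, integral_Ioc_eq_integral_Ioo]
    exact setIntegral_congr_fun measurableSet_Ioo fun x hx => by rw [hu.pde x hx t ht]
  have hdiffusion : ∫ x in (0:ℝ)..1, ψ (u x t) * uxx x t ≤ 0 :=
    integral_comp_mul_deriv2_nonpos zero_le_one hψ hψ'_cont hψ'_nonneg
      (fun x hx => hu.deriv_x x hx t ht) (fun x hx => hu.deriv_xx x hx t ht)
      (hu.cont_ux.uncurry_right t ht) (hu.cont_uxx.uncurry_right t ht) (hu.bc0 t ht) (hu.bc1 t ht)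
  have hψu : ContinuousOn (fun x => ψ (u x t)) (Icc 0 1) := hψ_cont.comp_continuousOn hu_cont
  rw [hpde]
  simp only [mul_sub]
  rw [intervalIntegral.integral_sub (f := fun x => ψ (u x t) * uxx x t)
    (g := fun x => ψ (u x t) * (lam x t * u x t))
    ((hψu.mul (hu.cont_uxx.uncurry_right t ht)).intervalIntegrable_of_Icc zero_le_one)
    ((hψu.mul ((hlam_cont.uncurry_right t ht.le).mul hu_cont)).intervalIntegrable_of_Icc
      zero_le_one)]
  have : ∫ x in (0:ℝ)..1, ψ (u x t) * (lam x t * u x t)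
      = ∫ x in (0:ℝ)..1, lam x t * (u x t * ψ (u x t)) :=
    intervalIntegral.integral_congr fun x _ => by ring
  linarith

lemma integral_regPowDeriv_mul_ut_le (hu : TargetSol lam u ut ux uxx) {lamb p R t ε : ℝ}
    (hlamb : 0 ≤ lamb) (hlam_cont : ContinuousOn (fun q : ℝ × ℝ => lam q.1 q.2) (Icc 0 1 ×ˢ Ici 0))
    (hlam_ge : ∀ x ∈ Icc (0:ℝ) 1, lamb ≤ lam x t) (hp : 1 ≤ p) (ht : 0 < t)
    (hR : ∀ x ∈ Icc (0:ℝ) 1, |u x t| ≤ R) (hε₀ : 0 < ε) (hε₁ : ε ≤ 1) :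
    ∫ x in (0:ℝ)..1, regPowDeriv p ε (u x t) * ut x t
      ≤ -(lamb * p) * ((∫ x in (0:ℝ)..1, regPow p ε (u x t)) - ε * (R ^ 2 + 1) ^ (p / 2)) := by
  set d := ε * (R ^ 2 + 1) ^ (p / 2)
  have hε : ε ≠ 0 := hε₀.ne'
  have hu_cont : ContinuousOn (fun x => u x t) (Icc 0 1) := hu.cont.uncurry_right t ht.le
  have hreaction : ∀ x ∈ Icc (0:ℝ) 1, lamb * p * regPow p ε (u x t) - lamb * p * d
      ≤ lam x t * (u x t * regPowDeriv p ε (u x t)) := by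
    intro x hx
    have hpow : (u x t ^ 2 + 1) ^ (p / 2) ≤ (R ^ 2 + 1) ^ (p / 2) :=
      Real.rpow_le_rpow (by positivity)
        (by linarith [sq_le_sq.2 ((hR x hx).trans (le_abs_self R))]) (by linarith)
    have hlow := mul_regPow_le hp hε₀ hε₁ (u x t)
    have hmono := mul_le_mul_of_nonneg_right (hlam_ge x hx)
      (mul_regPowDeriv_nonneg (p := p) (ε := ε) (by linarith) (u x t))
    have : p * (ε * (u x t ^ 2 + 1) ^ (p / 2)) ≤ p * d :=
      mul_le_mul_of_nonneg_left (mul_le_mul_of_nonneg_left hpow hε₀.le) (by linarith)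
    have := mul_le_mul_of_nonneg_left (by linarith : p * regPow p ε (u x t) - p * d
      ≤ u x t * regPowDeriv p ε (u x t)) hlamb
    linarith
  have hΦu : IntervalIntegrable (fun x => lamb * p * regPow p ε (u x t)) volume 0 1 :=
    (((continuous_regPow hε).comp_continuousOn hu_cont).const_mul (lamb * p)
      ).intervalIntegrable_of_Icc zero_le_one
  have hint : ∫ x in (0:ℝ)..1, (lamb * p * regPow p ε (u x t) - lamb * p * d)
      ≤ ∫ x in (0:ℝ)..1, lam x t * (u x t * regPowDeriv p ε (u x t)) :=
    intervalIntegral.integral_mono_on zero_le_one (hΦu.sub intervalIntegrable_const)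
      (((hlam_cont.uncurry_right t ht.le).mul (hu_cont.mul
        ((continuous_regPowDeriv hε).comp_continuousOn hu_cont))).intervalIntegrable_of_Icc
          zero_le_one) hreaction
  rw [intervalIntegral.integral_sub hΦu intervalIntegrable_const,
    intervalIntegral.integral_const_mul, intervalIntegral.integral_const] at hint
  simp only [sub_zero, smul_eq_mul, one_mul] at hint
  have := hu.integral_mul_ut_le hlam_cont (hasDerivAt_regPowDeriv hε) (continuous_regPowDeriv2 hε)
    (regPowDeriv2_nonneg hp) ht
  linarith

lemma integral_regPow_le (hu : TargetSol lam u ut ux uxx) {lamb p R T ε : ℝ} (hlamb : 0 ≤ lamb)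
    (hlam_cont : ContinuousOn (fun q : ℝ × ℝ => lam q.1 q.2) (Icc 0 1 ×ˢ Ici 0))
    (hlam_ge : ∀ x ∈ Icc (0:ℝ) 1, ∀ t ∈ Ici (0:ℝ), lamb ≤ lam x t) (hp : 1 ≤ p) (hT : 0 < T)
    (hR : ∀ x ∈ Icc (0:ℝ) 1, ∀ t ∈ Icc 0 T, |u x t| ≤ R) (hε₀ : 0 < ε) (hε₁ : ε ≤ 1) :
    ∫ x in (0:ℝ)..1, regPow p ε (u x T)
      ≤ Real.exp (-(lamb * p) * T) * (∫ x in (0:ℝ)..1, regPow p ε (u x 0))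
        + ε * (R ^ 2 + 1) ^ (p / 2) := by
  set F : ℝ → ℝ := fun t => ∫ x in (0:ℝ)..1, regPow p ε (u x t)
  set d := ε * (R ^ 2 + 1) ^ (p / 2)
  have hF_cont : ContinuousOn F (Icc 0 T) :=
    continuousOn_intervalIntegral_of_continuousOn_prod zero_le_one hT.le
      ((continuous_regPow hε₀.ne').comp_continuousOn
        (hu.cont.mono (prod_mono_right Icc_subset_Ici_self)))
  have hgronwall := sub_le_exp_mul_sub_of_hasDerivAt_le hT.le hF_cont
    (fun t ht => hu.hasDerivAt_integral_comp (hasDerivAt_regPow hε₀.ne')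
      (continuous_regPowDeriv hε₀.ne') ht.1)
    (fun t ht => hu.integral_regPowDeriv_mul_ut_le hlamb hlam_cont
      (fun x hx => hlam_ge x hx t ht.1.le) hp ht.1 (fun x hx => hR x hx t (Ioo_subset_Icc_self ht))
      hε₀ hε₁)
  rw [sub_zero, mul_sub] at hgronwall
  show F T ≤ Real.exp (-(lamb * p) * T) * F 0 + d
  linarith [mul_nonneg (Real.exp_pos (-(lamb * p) * T)).le (by positivity : 0 ≤ d)]

lemma integral_abs_rpow_le (hu : TargetSol lam u ut ux uxx) {lamb p T : ℝ} (hlamb : 0 ≤ lamb)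
    (hlam_cont : ContinuousOn (fun q : ℝ × ℝ => lam q.1 q.2) (Icc 0 1 ×ˢ Ici 0))
    (hlam_ge : ∀ x ∈ Icc (0:ℝ) 1, ∀ t ∈ Ici (0:ℝ), lamb ≤ lam x t) (hp : 1 ≤ p) (hT : 0 < T) :
    ∫ x in (0:ℝ)..1, |u x T| ^ p ≤ Real.exp (-(lamb * p) * T) * ∫ x in (0:ℝ)..1, |u x 0| ^ p := by
  obtain ⟨R, hR⟩ := (isCompact_Icc.prod isCompact_Icc).exists_bound_of_continuousOn
    (hu.cont.mono (prod_mono_right (Icc_subset_Ici_self : Icc 0 T ⊆ Ici 0)))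
  have huR : ∀ x ∈ Icc (0:ℝ) 1, ∀ t ∈ Icc 0 T, |u x t| ≤ R := fun x hx t ht => by
    simpa only [Real.norm_eq_abs] using hR (x, t) ⟨hx, ht⟩
  set G : ℝ → ℝ := fun ε => ∫ x in (0:ℝ)..1, regPow p ε (u x 0)
  have hu₀_cont : ContinuousOn (fun x => u x 0) (Icc 0 1) := hu.cont.uncurry_right 0 self_mem_Ici
  have hG_cont : ContinuousOn G (Icc 0 1) := by
    refine continuousOn_intervalIntegral_of_continuousOn_prod zero_le_one zero_le_one ?_
    exact (continuous_regPow_uncurry (by linarith)).comp_continuousOn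
      (f := fun q : ℝ × ℝ => (q.2, u q.1 0))
      (continuousOn_snd.prodMk (hu₀_cont.comp continuousOn_fst fun q hq => hq.1))
  have hG_zero : G 0 = ∫ x in (0:ℝ)..1, |u x 0| ^ p := by simp only [G, regPow_zero]
  have hu_cont : ContinuousOn (fun x => u x T) (Icc 0 1) := hu.cont.uncurry_right T hT.le
  have hle : ∀ ε ∈ Ioc (0:ℝ) 1, ∫ x in (0:ℝ)..1, |u x T| ^ p
      ≤ Real.exp (-(lamb * p) * T) * G ε + ε * (R ^ 2 + 1) ^ (p / 2) := fun ε hε =>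
    (intervalIntegral.integral_mono_on zero_le_one
      ((hu_cont.abs.rpow_const fun _ _ => Or.inr (by linarith)).intervalIntegrable_of_Icc
        zero_le_one)
      (((continuous_regPow hε.1.ne').comp_continuousOn hu_cont).intervalIntegrable_of_Icc
        zero_le_one)
      fun x _ => abs_rpow_le_regPow (by linarith) (u x T)).trans
    (hu.integral_regPow_le hlamb hlam_cont hlam_ge hp hT huR hε.1 hε.2)
  have hg_cont : ContinuousOn
      (fun ε => Real.exp (-(lamb * p) * T) * G ε + ε * (R ^ 2 + 1) ^ (p / 2)) (Icc 0 1) :=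
    (continuousOn_const.mul hG_cont).add (continuousOn_id.mul continuousOn_const)
  have hlim := ContinuousWithinAt.closure_le (x := 0) (s := Ioc 0 1)
    (by rw [closure_Ioc zero_ne_one]; exact left_mem_Icc.2 zero_le_one) continuousWithinAt_const
    ((hg_cont 0 (left_mem_Icc.2 zero_le_one)).mono Ioc_subset_Icc_self) hle
  rwa [hG_zero, zero_mul, add_zero] at hlim

end TargetSol

theorem stmt6 (lam u ut ux uxx : ℝ → ℝ → ℝ) (lamb : ℝ) (hlamb : 0 < lamb)
    (hlam_cont : ContinuousOn (fun q : ℝ × ℝ => lam q.1 q.2) (Set.Icc 0 1 ×ˢ Set.Ici 0))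
    (hlam_ge : ∀ x ∈ Set.Icc (0:ℝ) 1, ∀ t ∈ Set.Ici (0:ℝ), lamb ≤ lam x t)
    (hu : TargetSol lam u ut ux uxx)
    (p : ℝ) (hp : 1 ≤ p) :
    ∀ t : ℝ, 0 < t →
      (∫ x in (0:ℝ)..1, |u x t| ^ p) ^ (1 / p) ≤
        Real.exp (-lamb * t) * (∫ x in (0:ℝ)..1, |u x 0| ^ p) ^ (1 / p) := by
  intro t ht
  have hnonneg : ∀ s, 0 ≤ ∫ x in (0:ℝ)..1, |u x s| ^ p := fun s =>
    intervalIntegral.integral_nonneg zero_le_one fun x _ => by positivity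
  calc (∫ x in (0:ℝ)..1, |u x t| ^ p) ^ (1 / p)
      ≤ (Real.exp (-(lamb * p) * t) * ∫ x in (0:ℝ)..1, |u x 0| ^ p) ^ (1 / p) :=
        Real.rpow_le_rpow (hnonneg t)
          (hu.integral_abs_rpow_le hlamb.le hlam_cont hlam_ge hp ht) (by positivity)
    _ = Real.exp (-lamb * t) * (∫ x in (0:ℝ)..1, |u x 0| ^ p) ^ (1 / p) := by
        rw [Real.mul_rpow (Real.exp_pos _).le (hnonneg 0), ← Real.exp_mul]
        congr 2
        field_simp
end

section
/- Let p ∈ [1, ∞), let T > 0, and let u₁, u₂ be classical solutions of the target system with the same continuous coefficient λ satisfying λ(x,t) ≥ λ̲ > 0 and with initial data u₀₁ = u₁(·,0) and u₀₂ = u₂(·,0) respectively. Then the solution depends continuously on the L^p-norm of the initial data: max_{t∈[0,T]} (∫₀¹ |u₁(x,t) - u₂(x,t)|^p dx)^{1/p} ≤ (∫₀¹ |u₀₁(x) - u₀₂(x)|^p dx)^{1/p}. -/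
/-!
The difference `w = u₁ - u₂` solves the same equation. For `ε > 0` the regularised energy
`E_ε(t) = ∫₀¹ φ_ε(w(x,t)) dx` with `φ_ε(s) = (s² + ε)^(p/2)` is smooth in `t`, and integrating by
parts with the Neumann conditions gives
`E_ε' = -∫₀¹ φ_ε''(w) w_x² dx - ∫₀¹ λ w φ_ε'(w) dx ≤ 0`,
because `φ_ε` is convex for `p ≥ 1`, `s φ_ε'(s) ≥ 0` and `λ ≥ 0`. Letting `ε → 0` shows that
`∫₀¹ |w(x,t)|^p dx` is nonincreasing in `t`.
-/

open MeasureTheory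

open Set Filter Topology

noncomputable def regPow (p ε s : ℝ) : ℝ := (s ^ 2 + ε) ^ (p / 2)

noncomputable def regPowDeriv (p ε s : ℝ) : ℝ := p * s * (s ^ 2 + ε) ^ (p / 2 - 1)

noncomputable def regPowDeriv2 (p ε s : ℝ) : ℝ :=
  p * ((p - 1) * s ^ 2 + ε) * (s ^ 2 + ε) ^ (p / 2 - 2)

section RegPow

variable {p ε : ℝ}

lemma regPow_zero (s : ℝ) : regPow p 0 s = |s| ^ p := by
  rw [regPow, add_zero, ← sq_abs, ← Real.rpow_natCast, ← Real.rpow_mul (abs_nonneg s)]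
  congr 1
  push_cast
  ring

lemma hasDerivAt_regPow (hε : 0 < ε) (s : ℝ) : HasDerivAt (regPow p ε) (regPowDeriv p ε s) s := by
  refine (((hasDerivAt_pow 2 s).add_const ε).rpow_const (p := p / 2)
    (Or.inl (by positivity))).congr_deriv ?_
  rw [regPowDeriv]
  push_cast
  ring

lemma hasDerivAt_regPowDeriv (hε : 0 < ε) (s : ℝ) :
    HasDerivAt (regPowDeriv p ε) (regPowDeriv2 p ε s) s := by
  have hb : 0 < s ^ 2 + ε := by positivity
  refine (((hasDerivAt_id' s).const_mul p).mul (((hasDerivAt_pow 2 s).add_const ε).rpow_const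
    (p := p / 2 - 1) (Or.inl hb.ne'))).congr_deriv ?_
  rw [regPowDeriv2, show p / 2 - 1 = p / 2 - 2 + 1 by ring, Real.rpow_add_one hb.ne']
  push_cast
  ring_nf

lemma regPowDeriv2_nonneg (hp : 1 ≤ p) (hε : 0 ≤ ε) (s : ℝ) : 0 ≤ regPowDeriv2 p ε s :=
  mul_nonneg (mul_nonneg (by linarith) (by nlinarith [sq_nonneg s]))
    (Real.rpow_nonneg (by positivity) _)

lemma regPowDeriv_mul_self_nonneg (hp : 0 ≤ p) (hε : 0 ≤ ε) (s : ℝ) :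
    0 ≤ regPowDeriv p ε s * s := by
  rw [regPowDeriv, mul_right_comm, mul_assoc p, ← sq]
  positivity

lemma continuous_regPow (hε : 0 < ε) : Continuous (regPow p ε) :=
  continuous_iff_continuousAt.2 fun s => (hasDerivAt_regPow hε s).continuousAt

lemma continuous_regPowDeriv (hε : 0 < ε) : Continuous (regPowDeriv p ε) :=
  continuous_iff_continuousAt.2 fun s => (hasDerivAt_regPowDeriv hε s).continuousAt

lemma continuous_regPowDeriv2 (hε : 0 < ε) : Continuous (regPowDeriv2 p ε) := by
  unfold regPowDeriv2
  exact (by fun_prop : Continuous fun s : ℝ => p * ((p - 1) * s ^ 2 + ε)).mul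
    ((by fun_prop : Continuous fun s : ℝ => s ^ 2 + ε).rpow_const fun s => Or.inl (by positivity))

end RegPow

section ParametricIntegral

variable {F F' : ℝ → ℝ → ℝ} {a b : ℝ}

lemma continuousOn_intervalIntegral_of_continuousOn_prod_Ici {c : ℝ} (hab : a ≤ b)
    (hF : ContinuousOn (fun q : ℝ × ℝ => F q.1 q.2) (Icc a b ×ˢ Ici c)) :
    ContinuousOn (fun t => ∫ x in a..b, F x t) (Ici c) := by
  -- Clamping `(x, t)` to `[a, b] × [c, ∞)` extends `F` continuously to the whole plane.
  set G : ℝ → ℝ → ℝ := fun t x => F (max a (min b x)) (max c t)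
  have hG : Continuous (Function.uncurry G) :=
    hF.comp_continuous (f := fun q : ℝ × ℝ => (max a (min b q.2), max c q.1)) (by fun_prop) fun q =>
      ⟨⟨le_max_left _ _, max_le hab (min_le_left _ _)⟩, (le_max_left _ _ : c ≤ _)⟩
  refine (intervalIntegral.continuous_parametric_intervalIntegral_of_continuous' hG a b
    ).continuousOn.congr fun t (ht : c ≤ t) => intervalIntegral.integral_congr fun x hx => ?_
  rw [uIcc_of_le hab] at hx
  simp only [G, min_eq_right hx.2, max_eq_right hx.1, max_eq_right ht]

lemma hasDerivAt_intervalIntegral_of_continuousOn_s9 {U : Set ℝ} {t₀ : ℝ} (hab : a ≤ b)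
    (hU : IsOpen U) (ht₀ : t₀ ∈ U)
    (hF : ContinuousOn (fun q : ℝ × ℝ => F q.1 q.2) (Icc a b ×ˢ U))
    (hF' : ContinuousOn (fun q : ℝ × ℝ => F' q.1 q.2) (Icc a b ×ˢ U))
    (hderiv : ∀ x ∈ Icc a b, ∀ t ∈ U, HasDerivAt (F x ·) (F' x t) t) :
    HasDerivAt (fun t => ∫ x in a..b, F x t) (∫ x in a..b, F' x t₀) t₀ := by
  obtain ⟨δ, hδ, hδU⟩ := Metric.nhds_basis_closedBall.mem_iff.1 (hU.mem_nhds ht₀)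
  obtain ⟨C, hC⟩ := (isCompact_Icc.prod (isCompact_closedBall t₀ δ)).exists_bound_of_continuousOn
    (hF'.mono (prod_mono subset_rfl hδU))
  have hslice : ∀ t ∈ U, ContinuousOn (F · t) (Icc a b) := fun t ht =>
    hF.uncurry_right (f := F) t ht
  have hIoc : uIoc a b ⊆ Icc a b := by
    rw [uIoc_of_le hab]
    exact Ioc_subset_Icc_self
  refine (intervalIntegral.hasDerivAt_integral_of_dominated_loc_of_deriv_le (F := fun t x => F x t)
    (F' := fun t x => F' x t) (bound := fun _ => C) (Metric.ball_mem_nhds t₀ hδ) ?_ ?_ ?_ ?_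
    intervalIntegrable_const ?_).2
  · filter_upwards [hU.mem_nhds ht₀] with t ht
    exact ((hslice t ht).mono hIoc).aestronglyMeasurable measurableSet_uIoc
  · exact (hslice t₀ ht₀).intervalIntegrable_of_Icc hab
  · exact ((hF'.uncurry_right (f := F') t₀ ht₀).mono hIoc).aestronglyMeasurable measurableSet_uIoc
  · exact ae_of_all _ fun x hx t ht => hC (x, t) ⟨hIoc hx, Metric.ball_subset_closedBall ht⟩
  · exact ae_of_all _ fun x hx t ht =>
      hderiv x (hIoc hx) t (hδU (Metric.ball_subset_closedBall ht))

end ParametricIntegral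

namespace TargetSol

variable {lam u₁ ut₁ ux₁ uxx₁ u₂ ut₂ ux₂ uxx₂ w wt wx wxx : ℝ → ℝ → ℝ} {p ε t : ℝ}

lemma sub (h₁ : TargetSol lam u₁ ut₁ ux₁ uxx₁) (h₂ : TargetSol lam u₂ ut₂ ux₂ uxx₂) :
    TargetSol lam (fun x t => u₁ x t - u₂ x t) (fun x t => ut₁ x t - ut₂ x t)
      (fun x t => ux₁ x t - ux₂ x t) (fun x t => uxx₁ x t - uxx₂ x t) where
  cont := h₁.cont.sub h₂.cont
  deriv_t x hx t ht := (h₁.deriv_t x hx t ht).sub (h₂.deriv_t x hx t ht)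
  deriv_x x hx t ht := (h₁.deriv_x x hx t ht).sub (h₂.deriv_x x hx t ht)
  deriv_xx x hx t ht := (h₁.deriv_xx x hx t ht).sub (h₂.deriv_xx x hx t ht)
  cont_ut := h₁.cont_ut.sub h₂.cont_ut
  cont_ux := h₁.cont_ux.sub h₂.cont_ux
  cont_uxx := h₁.cont_uxx.sub h₂.cont_uxx
  pde x hx t ht := by rw [h₁.pde x hx t ht, h₂.pde x hx t ht]; ring
  bc0 t ht := by rw [h₁.bc0 t ht, h₂.bc0 t ht, sub_zero]
  bc1 t ht := by rw [h₁.bc1 t ht, h₂.bc1 t ht, sub_zero]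

variable (hw : TargetSol lam w wt wx wxx)
include hw

lemma integral_regPowDeriv_mul_uxx (hε : 0 < ε) (ht : 0 < t) :
    ∫ x in (0:ℝ)..1, regPowDeriv p ε (w x t) * wxx x t =
      -∫ x in (0:ℝ)..1, regPowDeriv2 p ε (w x t) * wx x t * wx x t := by
  have hw_t := hw.cont.uncurry_right (f := w) t (le_of_lt ht)
  have hwx_t := hw.cont_ux.uncurry_right (f := wx) t ht
  have hwxx_t := hw.cont_uxx.uncurry_right (f := wxx) t ht
  have h01 : uIcc (0:ℝ) 1 = Icc 0 1 := uIcc_of_le zero_le_one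
  rw [intervalIntegral.integral_mul_deriv_eq_deriv_mul (u := fun x => regPowDeriv p ε (w x t))
    (v := fun x => wx x t)
    (fun x hx => (hasDerivAt_regPowDeriv hε _).comp x (hw.deriv_x x (h01 ▸ hx) t ht))
    (fun x hx => hw.deriv_xx x (h01 ▸ hx) t ht)
    ((((continuous_regPowDeriv2 hε).comp_continuousOn hw_t).mul hwx_t).intervalIntegrable_of_Icc
      zero_le_one)
    (hwxx_t.intervalIntegrable_of_Icc zero_le_one)]
  simp [hw.bc0 t ht, hw.bc1 t ht]

lemma integral_regPowDeriv_mul_ut_nonpos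
    (hlam : ∀ x ∈ Ioo (0:ℝ) 1, ∀ s ∈ Ioi (0:ℝ), 0 ≤ lam x s) (hp : 1 ≤ p) (hε : 0 < ε)
    (ht : 0 < t) : ∫ x in (0:ℝ)..1, regPowDeriv p ε (w x t) * wt x t ≤ 0 := by
  have hw_t := hw.cont.uncurry_right (f := w) t (le_of_lt ht)
  have hφ' := (continuous_regPowDeriv (p := p) hε).comp_continuousOn hw_t
  have hint_xx : IntervalIntegrable (fun x => regPowDeriv p ε (w x t) * wxx x t) volume 0 1 :=
    (hφ'.mul (hw.cont_uxx.uncurry_right (f := wxx) t ht)).intervalIntegrable_of_Icc zero_le_one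
  have hint_t : IntervalIntegrable (fun x => regPowDeriv p ε (w x t) * wt x t) volume 0 1 :=
    (hφ'.mul (hw.cont_ut.uncurry_right (f := wt) t ht)).intervalIntegrable_of_Icc zero_le_one
  have hdiffusion : 0 ≤ ∫ x in (0:ℝ)..1, regPowDeriv2 p ε (w x t) * wx x t * wx x t :=
    intervalIntegral.integral_nonneg zero_le_one fun x _ => by
      rw [mul_assoc]
      exact mul_nonneg (regPowDeriv2_nonneg hp hε.le _) (mul_self_nonneg _)
  -- On the open interval the PDE turns `φ'(w) (w_xx - w_t)` into `λ w φ'(w) ≥ 0`.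
  have habsorption : 0 ≤ ∫ x in (0:ℝ)..1, (regPowDeriv p ε (w x t) * wxx x t -
      regPowDeriv p ε (w x t) * wt x t) := by
    refine intervalIntegral.integral_nonneg_of_ae_restrict zero_le_one ?_
    rw [EventuallyLE, ← Measure.restrict_congr_set Ioo_ae_eq_Icc,
      ae_restrict_iff' measurableSet_Ioo]
    refine ae_of_all _ fun x hx => ?_
    rw [hw.pde x hx t ht, show ∀ a b c d : ℝ, a * b - a * (b - c * d) = c * (a * d) by
      intros; ring]
    exact mul_nonneg (hlam x hx t ht) (regPowDeriv_mul_self_nonneg (by linarith) hε.le _)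
  rw [intervalIntegral.integral_sub hint_xx hint_t, integral_regPowDeriv_mul_uxx hw hε ht]
    at habsorption
  linarith

lemma hasDerivAt_integral_regPow (hε : 0 < ε) (ht : 0 < t) :
    HasDerivAt (fun s => ∫ x in (0:ℝ)..1, regPow p ε (w x s))
      (∫ x in (0:ℝ)..1, regPowDeriv p ε (w x t) * wt x t) t := by
  have hw_pos := hw.cont.mono (prod_mono subset_rfl Ioi_subset_Ici_self)
  exact hasDerivAt_intervalIntegral_of_continuousOn_s9 zero_le_one isOpen_Ioi ht
    ((continuous_regPow hε).comp_continuousOn hw_pos)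
    (((continuous_regPowDeriv hε).comp_continuousOn hw_pos).mul hw.cont_ut)
    fun x hx s hs => (hasDerivAt_regPow hε _).comp s (hw.deriv_t x hx s hs)

lemma antitoneOn_integral_regPow
    (hlam : ∀ x ∈ Ioo (0:ℝ) 1, ∀ s ∈ Ioi (0:ℝ), 0 ≤ lam x s) (hp : 1 ≤ p) (hε : 0 < ε) :
    AntitoneOn (fun s => ∫ x in (0:ℝ)..1, regPow p ε (w x s)) (Ici 0) := by
  refine antitoneOn_of_hasDerivWithinAt_nonpos (convex_Ici 0)
    (f' := fun s => ∫ x in (0:ℝ)..1, regPowDeriv p ε (w x s) * wt x s)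
    (continuousOn_intervalIntegral_of_continuousOn_prod_Ici zero_le_one
      ((continuous_regPow hε).comp_continuousOn hw.cont)) (fun s hs => ?_) (fun s hs => ?_)
  · rw [interior_Ici] at hs
    exact (hasDerivAt_integral_regPow hw hε hs).hasDerivWithinAt
  · rw [interior_Ici] at hs
    exact integral_regPowDeriv_mul_ut_nonpos hw hlam hp hε hs

lemma tendsto_integral_regPow (hp : 0 ≤ p) (ht : 0 ≤ t) :
    Tendsto (fun ε => ∫ x in (0:ℝ)..1, regPow p ε (w x t)) (𝓝[>] 0)
      (𝓝 (∫ x in (0:ℝ)..1, |w x t| ^ p)) := by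
  have hw_t := hw.cont.uncurry_right (f := w) t ht
  have hcont : ContinuousOn (fun ε => ∫ x in (0:ℝ)..1, regPow p ε (w x t)) (Ici 0) :=
    continuousOn_intervalIntegral_of_continuousOn_prod_Ici (F := fun x ε => regPow p ε (w x t))
      zero_le_one <| (((hw_t.comp continuousOn_fst fun _ hq => hq.1).pow 2).add
        continuousOn_snd).rpow_const fun _ _ => Or.inr (by positivity)
  simpa only [regPow_zero] using
    ((hcont 0 self_mem_Ici).tendsto).mono_left (nhdsWithin_mono _ Ioi_subset_Ici_self)

lemma integral_abs_rpow_le_s9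
    (hlam : ∀ x ∈ Ioo (0:ℝ) 1, ∀ s ∈ Ioi (0:ℝ), 0 ≤ lam x s) (hp : 1 ≤ p) (ht : 0 ≤ t) :
    ∫ x in (0:ℝ)..1, |w x t| ^ p ≤ ∫ x in (0:ℝ)..1, |w x 0| ^ p :=
  le_of_tendsto_of_tendsto (tendsto_integral_regPow hw (by linarith) ht)
    (tendsto_integral_regPow hw (by linarith) le_rfl)
    (eventually_nhdsWithin_of_forall fun _ hε =>
      antitoneOn_integral_regPow hw hlam hp hε self_mem_Ici ht ht)

end TargetSol

theorem stmt9_general (lam u₁ ut₁ ux₁ uxx₁ u₂ ut₂ ux₂ uxx₂ : ℝ → ℝ → ℝ) (lamb : ℝ) (hlamb : 0 < lamb)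
    (hlam_ge : ∀ x ∈ Set.Icc (0:ℝ) 1, ∀ t ∈ Set.Ici (0:ℝ), lamb ≤ lam x t)
    (hu₁ : TargetSol lam u₁ ut₁ ux₁ uxx₁)
    (hu₂ : TargetSol lam u₂ ut₂ ux₂ uxx₂)
    (p : ℝ) (hp : 1 ≤ p) (T : ℝ) :
    ∀ t ∈ Set.Icc (0:ℝ) T,
      (∫ x in (0:ℝ)..1, |u₁ x t - u₂ x t| ^ p) ^ (1 / p) ≤
        (∫ x in (0:ℝ)..1, |u₁ x 0 - u₂ x 0| ^ p) ^ (1 / p) := by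
  intro t ht
  have hlam : ∀ x ∈ Ioo (0:ℝ) 1, ∀ s ∈ Ioi (0:ℝ), 0 ≤ lam x s := fun x hx s hs =>
    hlamb.le.trans (hlam_ge x (Ioo_subset_Icc_self hx) s (Ioi_subset_Ici_self hs))
  have hdecay := (hu₁.sub hu₂).integral_abs_rpow_le_s9 hlam hp ht.1
  exact Real.rpow_le_rpow (intervalIntegral.integral_nonneg zero_le_one fun _ _ => by positivity)
    hdecay (by positivity)

theorem stmt9 (lam u₁ ut₁ ux₁ uxx₁ u₂ ut₂ ux₂ uxx₂ : ℝ → ℝ → ℝ) (lamb : ℝ) (hlamb : 0 < lamb)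
    (hlam_cont : ContinuousOn (fun q : ℝ × ℝ => lam q.1 q.2) (Set.Icc 0 1 ×ˢ Set.Ici 0))
    (hlam_ge : ∀ x ∈ Set.Icc (0:ℝ) 1, ∀ t ∈ Set.Ici (0:ℝ), lamb ≤ lam x t)
    (hu₁ : TargetSol lam u₁ ut₁ ux₁ uxx₁)
    (hu₂ : TargetSol lam u₂ ut₂ ux₂ uxx₂)
    (p : ℝ) (hp : 1 ≤ p) (T : ℝ) (hT : 0 < T) :
    ∀ t ∈ Set.Icc (0:ℝ) T,
      (∫ x in (0:ℝ)..1, |u₁ x t - u₂ x t| ^ p) ^ (1 / p) ≤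
        (∫ x in (0:ℝ)..1, |u₁ x 0 - u₂ x 0| ^ p) ^ (1 / p) :=
  stmt9_general lam u₁ ut₁ ux₁ uxx₁ u₂ ut₂ ux₂ uxx₂ lamb hlamb hlam_ge hu₁ hu₂ p hp T
end
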